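/- Let K be a field of characteristic zero, let I be a finite index set, let σ denote the formal power series σ(T) = Σ_{k≥1} (-1)^k T^k in K[[T]], and for each i ∈ I let q_i ∈ K, let ε_i ∈ K with ε_i = 1 or ε_i = -1, and let F_i ∈ K[[T]] be a nonzero formal power series satisfying F_i∘σ = ε_i·exp(q_i·log(1+T))·F_i. Let F = Π_{i∈I} F_i, let m be the order of F, and let c_k denote the k-th coefficient of F. Then c_{m+1} = -(c_m/2)·((Σ_{i∈I} q_i) + m). -/

import Mathlib

open PowerSeries Finset

/-- `σ(T) = Σ_{k≥1} (-1)^k T^k = (1+T)⁻¹ - 1`. -/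
noncomputable def sigma (K : Type*) [Ring K] : PowerSeries K :=
  PowerSeries.mk fun k => if k = 0 then 0 else (-1) ^ k

/-- Substitution `f ∘ g` of a power series `g` with zero constant term
into a power series `f`: the `n`-th coefficient is `Σ_{j≤n} fⱼ · coeff n (g^j)`. -/
noncomputable def PowerSeries.comp {K : Type*} [CommSemiring K]
    (f g : PowerSeries K) : PowerSeries K :=
  PowerSeries.mk fun n => ∑ j ∈ range (n + 1), coeff j f * coeff n (g ^ j)

/-- `log(1+T) = Σ_{k≥1} (-1)^{k+1} T^k / k`. -/
noncomputable def logOneAdd (K : Type*) [Field K] [CharZero K] : PowerSeries K :=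
  PowerSeries.mk fun k => if k = 0 then 0 else (-1) ^ (k + 1) / (k : K)

/-- `exp(q·log(1+T)) = Σ_{n≥0} qⁿ·log(1+T)ⁿ/n!`, the formal binomial series `(1+T)^q`. -/
noncomputable def onePlusTPow {K : Type*} [Field K] [CharZero K] (q : K) :
    PowerSeries K :=
  (PowerSeries.exp K).comp (C q * logOneAdd K)

/-!
Write a nonzero factor as `F = X ^ n * u` with `u(0) ≠ 0`, where `n` is its order. Since
`σ = -T + T² - ⋯`, comparing the coefficients of `Tⁿ` in `F∘σ = ε·(1+T)^q·F` forces `ε = (-1)ⁿ`,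
and comparing those of `Tⁿ⁺¹` then gives `u₁ = -(q + n)/2 · u₀`. The ratio `u₁/u₀` is additive
under multiplication and the orders add up to `m`, which gives the claim for the product.
-/

namespace PowerSeries

section Comp

variable {R : Type*} [CommSemiring R]

theorem coeff_comp_of_X_pow_dvd {f : R⟦X⟧} {n : ℕ} (hf : X ^ n ∣ f) (g : R⟦X⟧) :
    coeff n (f.comp g) = coeff n f * coeff n (g ^ n) := by
  have hlow := X_pow_dvd_iff.mp hf
  rw [comp, coeff_mk, sum_range_succ,
    sum_eq_zero fun j hj => by rw [hlow j (mem_range.mp hj), zero_mul], zero_add]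

theorem coeff_succ_comp_of_X_pow_dvd {f : R⟦X⟧} {n : ℕ} (hf : X ^ n ∣ f) (g : R⟦X⟧) :
    coeff (n + 1) (f.comp g)
      = coeff n f * coeff (n + 1) (g ^ n) + coeff (n + 1) f * coeff (n + 1) (g ^ (n + 1)) := by
  have hlow := X_pow_dvd_iff.mp hf
  rw [comp, coeff_mk, sum_range_succ, sum_range_succ,
    sum_eq_zero fun j hj => by rw [hlow j (mem_range.mp hj), zero_mul], zero_add]

theorem constantCoeff_comp (f g : R⟦X⟧) : constantCoeff (f.comp g) = constantCoeff f := by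
  simpa using coeff_comp_of_X_pow_dvd (n := 0) (f := f) (by simp) g

theorem coeff_one_comp (f g : R⟦X⟧) : coeff 1 (f.comp g) = coeff 1 f * coeff 1 g := by
  simpa using coeff_succ_comp_of_X_pow_dvd (n := 0) (f := f) (by simp) g

end Comp

theorem coeff_one_prod_eq_sum_mul_constantCoeff {R ι : Type*} [CommSemiring R] (s : Finset ι)
    (u : ι → R⟦X⟧) (r : ι → R) (hr : ∀ i ∈ s, coeff 1 (u i) = r i * constantCoeff (u i)) :
    coeff 1 (∏ i ∈ s, u i) = (∑ i ∈ s, r i) * constantCoeff (∏ i ∈ s, u i) := by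
  classical
  induction s using Finset.induction_on with
  | empty => simp
  | insert a s ha ih =>
    rw [prod_insert ha, sum_insert ha, coeff_one_mul, map_mul, hr a (mem_insert_self a s),
      ih fun i hi => hr i (mem_insert_of_mem hi)]
    ring

end PowerSeries

section Sigma

variable {K : Type*} [CommRing K]

theorem sigma_eq_X_mul : sigma K = X * PowerSeries.mk fun k => (-1) ^ (k + 1) := by
  ext (_ | n)
  · simp [sigma]
  · simp [sigma, coeff_succ_X_mul, pow_succ]

theorem coeff_sigma_pow_self (n : ℕ) : coeff n (sigma K ^ n) = (-1) ^ n := by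
  rw [sigma_eq_X_mul, mul_pow]
  simpa using coeff_X_pow_mul ((PowerSeries.mk fun k => (-1 : K) ^ (k + 1)) ^ n) n 0

theorem coeff_succ_sigma_pow (n : ℕ) : coeff (n + 1) (sigma K ^ n) = -(n * (-1) ^ n) := by
  rw [sigma_eq_X_mul, mul_pow, add_comm, coeff_X_pow_mul, coeff_one_pow]
  rcases n with _ | n
  · simp
  · simp [pow_succ]

end Sigma

section OnePlusTPow

variable {K : Type*} [Field K] [CharZero K]

theorem constantCoeff_onePlusTPow (q : K) : constantCoeff (onePlusTPow q) = 1 := by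
  simp [onePlusTPow, PowerSeries.constantCoeff_comp]

theorem coeff_one_onePlusTPow (q : K) : coeff 1 (onePlusTPow q) = q := by
  simp [onePlusTPow, PowerSeries.coeff_one_comp, logOneAdd]

theorem coeff_one_eq_of_comp_sigma_eq {q e : K} {u : K⟦X⟧} {n : ℕ} (hu : constantCoeff u ≠ 0)
    (hfe : (X ^ n * u).comp (sigma K) = C e * (onePlusTPow q * (X ^ n * u))) :
    coeff 1 u = -(q + n) / 2 * constantCoeff u := by
  have hdvd : X ^ n ∣ X ^ n * u := dvd_mul_right _ _
  have hrhs : C e * (onePlusTPow q * (X ^ n * u)) = X ^ n * (C e * (onePlusTPow q * u)) := by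
    ring
  have h_n := congrArg (coeff n) hfe
  have h_succ := congrArg (coeff (n + 1)) hfe
  rw [PowerSeries.coeff_comp_of_X_pow_dvd hdvd, hrhs] at h_n
  rw [PowerSeries.coeff_succ_comp_of_X_pow_dvd hdvd, hrhs] at h_succ
  simp only [coeff_X_pow_mul', le_refl, Nat.le_succ, if_true, Nat.sub_self,
    Nat.add_sub_cancel_left, coeff_zero_eq_constantCoeff, coeff_C_mul, map_mul, coeff_one_mul,
    constantCoeff_onePlusTPow, coeff_one_onePlusTPow, coeff_sigma_pow_self,
    coeff_succ_sigma_pow] at h_n h_succ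
  have he : e = (-1) ^ n := by
    refine (mul_right_cancel₀ hu ?_).symm
    linear_combination h_n
  subst he
  rcases neg_one_pow_eq_or K n with h | h <;> rw [pow_succ, h] at h_succ
  · linear_combination -h_succ / 2
  · linear_combination h_succ / 2

end OnePlusTPow

theorem subleading_coeff_prod_T_general
    {K : Type*} [Field K] [CharZero K] {ι : Type*} [Fintype ι]
    (q ε : ι → K)
    (F : ι → PowerSeries K) (hF : ∀ i, F i ≠ 0)
    (hfe : ∀ i, (F i).comp (sigma K) = C (ε i) * (onePlusTPow (q i) * F i))
    (m : ℕ) (hm : (∏ i, F i).order = (m : ℕ∞)) :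
    coeff (m + 1) (∏ i, F i)
      = -(coeff m (∏ i, F i) / 2) * ((∑ i, q i) + m) := by
  have hratio (i : ι) : coeff 1 (F i).divXPowOrder
      = -(q i + (F i).order.toNat) / 2 * constantCoeff (F i).divXPowOrder := by
    refine coeff_one_eq_of_comp_sigma_eq (e := ε i)
      (constantCoeff_divXPowOrder_eq_zero_iff.not.mpr (hF i)) ?_
    rw [X_pow_order_mul_divXPowOrder]
    exact hfe i
  have hsum : ∑ i, (F i).order.toNat = m := by
    rw [order_prod, ← sum_congr rfl fun i _ => coe_toNat_order (hF i)] at hm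
    exact_mod_cast hm
  have hprod : (∏ i, F i).order.toNat = m := by simp [hm]
  calc coeff (m + 1) (∏ i, F i) = coeff 1 (∏ i, (F i).divXPowOrder) := by
        rw [← divXPowOrder_prod, coeff_divXPowOrder, hprod, add_comm]
    _ = (∑ i, -(q i + (F i).order.toNat) / 2) * constantCoeff (∏ i, (F i).divXPowOrder) :=
        coeff_one_prod_eq_sum_mul_constantCoeff _ _ _ fun i _ => hratio i
    _ = -(coeff m (∏ i, F i) / 2) * ((∑ i, q i) + m) := by
        rw [← divXPowOrder_prod, constantCoeff_divXPowOrder, hprod, ← sum_div, sum_neg_distrib,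
          sum_add_distrib, ← hsum]
        push_cast
        ring

/-- if each nonzero `Fᵢ ∈ K⟦T⟧` satisfies
`Fᵢ∘σ = εᵢ·exp(qᵢ·log(1+T))·Fᵢ` with `εᵢ = ±1`, and `F = Π Fᵢ` has order `m` with
coefficients `cₖ`, then `c_{m+1} = -(c_m/2)·((Σ qᵢ) + m)`. -/
theorem subleading_coeff_prod_T
    {K : Type*} [Field K] [CharZero K] {ι : Type*} [Fintype ι]
    (q ε : ι → K) (hε : ∀ i, ε i = 1 ∨ ε i = -1)
    (F : ι → PowerSeries K) (hF : ∀ i, F i ≠ 0)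
    (hfe : ∀ i, (F i).comp (sigma K) = C (ε i) * (onePlusTPow (q i) * F i))
    (m : ℕ) (hm : (∏ i, F i).order = (m : ℕ∞)) :
    coeff (m + 1) (∏ i, F i)
      = -(coeff m (∏ i, F i) / 2) * ((∑ i, q i) + m) :=
  subleading_coeff_prod_T_general q ε F hF hfe m hm
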